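/- Let G be a {2P3, P3+K3, 2K3, C4, C5, C6}-free graph containing an induced 2K2 on vertices {1,2,3,4} with edges 12 and 34, and let N_X be the set of vertices outside {1,2,3,4} whose neighborhood in {1,2,3,4} equals X. If N_1 ∪ N_2 ∪ N_12 is nonempty, then N_3 is empty or N_4 is empty. -/

import Mathlib

/-!
Let `x ∈ N₁ ∪ N₂ ∪ N₁₂`, `y ∈ N₃` and `z ∈ N₄`. If `x` were not adjacent to `y`, then `x` together
with `v1 v2` would span a `P₃` or a triangle with no edges to the induced path `y v3 v4`, giving an
induced `2P₃` or `P₃ + K₃`; so `x ∼ y`, and symmetrically `x ∼ z`. The vertices `y` and `z` are not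
adjacent, since otherwise `y v3 v4 z` is an induced `C₄`. But then `x y v3 v4 z` is an induced `C₅`.
-/

open scoped Classical

/-- Graph on `Fin n` with the given edge list. -/
def graphOfList (n : ℕ) (l : List (ℕ × ℕ)) : SimpleGraph (Fin n) :=
  SimpleGraph.fromRel (fun a b => ((a : ℕ), (b : ℕ)) ∈ l)

/-- `G` contains no induced subgraph isomorphic to `H`. -/
def Free {α : Type*} {V : Type*} (H : SimpleGraph α) (G : SimpleGraph V) : Prop :=
  IsEmpty (H ↪g G)

def twoP3 : SimpleGraph (Fin 6) := graphOfList 6 [(0,1),(1,2),(3,4),(4,5)]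
def p3PlusK3 : SimpleGraph (Fin 6) := graphOfList 6 [(0,1),(1,2),(3,4),(4,5),(3,5)]
def twoK3 : SimpleGraph (Fin 6) := graphOfList 6 [(0,1),(1,2),(0,2),(3,4),(4,5),(3,5)]
def cycle4 : SimpleGraph (Fin 4) := graphOfList 4 [(0,1),(1,2),(2,3),(3,0)]
def cycle5 : SimpleGraph (Fin 5) := graphOfList 5 [(0,1),(1,2),(2,3),(3,4),(4,0)]
def cycle6 : SimpleGraph (Fin 6) := graphOfList 6 [(0,1),(1,2),(2,3),(3,4),(4,5),(5,0)]

/-- `G` is `{2P3, P3+K3, 2K3, C4, C5, C6}`-free. -/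
def FFree {V : Type*} (G : SimpleGraph V) : Prop :=
  Free twoP3 G ∧ Free p3PlusK3 G ∧ Free twoK3 G ∧ Free cycle4 G ∧ Free cycle5 G ∧ Free cycle6 G

/-- `v1 v2 v3 v4` form an induced `2K2` with edges `v1v2` and `v3v4`. -/
def Induced2K2 {V : Type*} (G : SimpleGraph V) (v1 v2 v3 v4 : V) : Prop :=
  v1 ≠ v2 ∧ v1 ≠ v3 ∧ v1 ≠ v4 ∧ v2 ≠ v3 ∧ v2 ≠ v4 ∧ v3 ≠ v4 ∧
  G.Adj v1 v2 ∧ G.Adj v3 v4 ∧ ¬ G.Adj v1 v3 ∧ ¬ G.Adj v1 v4 ∧ ¬ G.Adj v2 v3 ∧ ¬ G.Adj v2 v4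

theorem Free.false_of_adj_iff {α V : Type*} [LinearOrder α] {H : SimpleGraph α}
    {G : SimpleGraph V} (hH : Free H G) (f : α → V)
    (hadj : ∀ i j, i < j → (G.Adj (f i) (f j) ↔ H.Adj i j))
    (htwin : ∀ i j, i < j → (∀ k, H.Adj i k ↔ H.Adj j k) → f i ≠ f j) : False := by
  have hadj' : ∀ i j, G.Adj (f i) (f j) ↔ H.Adj i j := by
    intro i j
    rcases lt_trichotomy i j with h | rfl | h
    · exact hadj i j h
    · simp
    · rw [G.adj_comm, H.adj_comm]; exact hadj j i h
  -- Indices with equal images have equal neighbourhoods in `H`, so only twins need separating.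
  have hinj : Function.Injective f := by
    intro i j hij
    by_contra hne
    have htw : ∀ i j, f i = f j → ∀ k, H.Adj i k ↔ H.Adj j k := fun i j h k => by
      rw [← hadj', ← hadj', h]
    rcases lt_or_gt_of_ne hne with h | h
    · exact htwin i j h (htw i j hij) hij
    · exact htwin j i h (htw j i hij.symm) hij.symm
  exact hH.false ⟨⟨f, hinj⟩, hadj' _ _⟩

theorem no_induced_cycle4 {V : Type*} {G : SimpleGraph V} (hf : Free cycle4 G) {a b c d : V}
    (hab : G.Adj a b) (hbc : G.Adj b c) (hcd : G.Adj c d) (had : G.Adj a d)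
    (hac : ¬ G.Adj a c) (hbd : ¬ G.Adj b d) (hac' : a ≠ c) (hbd' : b ≠ d) : False := by
  refine hf.false_of_adj_iff ![a, b, c, d] ?_ ?_
  · intro i j hij
    fin_cases i <;> fin_cases j <;> simp_all [cycle4, graphOfList]
  · intro i j hij htw
    fin_cases i <;> fin_cases j <;> simp_all [cycle4, graphOfList, Fin.forall_fin_succ]

theorem no_induced_cycle5 {V : Type*} {G : SimpleGraph V} (hf : Free cycle5 G) {a b c d e : V}
    (hab : G.Adj a b) (hbc : G.Adj b c) (hcd : G.Adj c d) (hde : G.Adj d e) (hae : G.Adj a e)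
    (hac : ¬ G.Adj a c) (had : ¬ G.Adj a d) (hbd : ¬ G.Adj b d) (hbe : ¬ G.Adj b e)
    (hce : ¬ G.Adj c e) : False := by
  refine hf.false_of_adj_iff ![a, b, c, d, e] ?_ ?_
  · intro i j hij
    fin_cases i <;> fin_cases j <;> simp_all [cycle5, graphOfList]
  · intro i j hij htw
    fin_cases i <;> fin_cases j <;> simp_all [cycle5, graphOfList, Fin.forall_fin_succ]

theorem no_induced_p3_p3_or_k3 {V : Type*} {G : SimpleGraph V} (h2P3 : Free twoP3 G)
    (hP3K3 : Free p3PlusK3 G) {a b c d e f : V}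
    (hab : G.Adj a b) (hbc : G.Adj b c) (hac' : a ≠ c)
    (hde : G.Adj d e) (hef : G.Adj e f) (hdf : ¬ G.Adj d f) (hdf' : d ≠ f)
    (hanti : ∀ u ∈ ({a, b, c} : Set V), ∀ w ∈ ({d, e, f} : Set V), ¬ G.Adj u w) : False := by
  simp only [Set.mem_insert_iff, Set.mem_singleton_iff, forall_eq_or_imp, forall_eq] at hanti
  by_cases hac : G.Adj a c
  · refine hP3K3.false_of_adj_iff ![d, e, f, a, b, c] ?_ ?_
    · intro i j hij
      fin_cases i <;> fin_cases j <;> simp_all [p3PlusK3, graphOfList, G.adj_comm]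
    · intro i j hij htw
      fin_cases i <;> fin_cases j <;> simp_all [p3PlusK3, graphOfList, Fin.forall_fin_succ]
  · refine h2P3.false_of_adj_iff ![a, b, c, d, e, f] ?_ ?_
    · intro i j hij
      fin_cases i <;> fin_cases j <;> simp_all [twoP3, graphOfList]
    · intro i j hij htw
      fin_cases i <;> fin_cases j <;> simp_all [twoP3, graphOfList, Fin.forall_fin_succ]

namespace Induced2K2

variable {V : Type*} {G : SimpleGraph V} {v1 v2 v3 v4 : V}

theorem swap_left (h : Induced2K2 G v1 v2 v3 v4) : Induced2K2 G v2 v1 v3 v4 := by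
  obtain ⟨h12, h13, h14, h23, h24, h34, a12, a34, n13, n14, n23, n24⟩ := h
  exact ⟨h12.symm, h23, h24, h13, h14, h34, a12.symm, a34, n23, n24, n13, n14⟩

theorem swap_right (h : Induced2K2 G v1 v2 v3 v4) : Induced2K2 G v1 v2 v4 v3 := by
  obtain ⟨h12, h13, h14, h23, h24, h34, a12, a34, n13, n14, n23, n24⟩ := h
  exact ⟨h12, h14, h13, h24, h23, h34.symm, a12, a34.symm, n14, n13, n24, n23⟩

theorem adj_of_adj_fst (h2P3 : Free twoP3 G) (hP3K3 : Free p3PlusK3 G)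
    (h : Induced2K2 G v1 v2 v3 v4) {x y : V}
    (hx1 : G.Adj x v1) (hx2 : x ≠ v2) (hx3 : ¬ G.Adj x v3) (hx4 : ¬ G.Adj x v4)
    (hy3 : G.Adj y v3) (hy1 : ¬ G.Adj y v1) (hy2 : ¬ G.Adj y v2) (hy4 : ¬ G.Adj y v4)
    (hy4' : y ≠ v4) : G.Adj x y := by
  obtain ⟨-, -, -, -, -, -, a12, a34, n13, n14, n23, n24⟩ := h
  by_contra hxy
  refine no_induced_p3_p3_or_k3 h2P3 hP3K3 hx1 a12 hx2 hy3 a34 hy4 hy4' ?_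
  rintro _ (rfl | rfl | rfl) _ (rfl | rfl | rfl) <;> simp_all [G.adj_comm]

theorem adj_of_adj_left (h2P3 : Free twoP3 G) (hP3K3 : Free p3PlusK3 G)
    (h : Induced2K2 G v1 v2 v3 v4) {x y : V}
    (hx12 : G.Adj x v1 ∨ G.Adj x v2) (hx1 : x ≠ v1) (hx2 : x ≠ v2)
    (hx3 : ¬ G.Adj x v3) (hx4 : ¬ G.Adj x v4)
    (hy3 : G.Adj y v3) (hy1 : ¬ G.Adj y v1) (hy2 : ¬ G.Adj y v2) (hy4 : ¬ G.Adj y v4)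
    (hy4' : y ≠ v4) : G.Adj x y := by
  rcases hx12 with hxv1 | hxv2
  · exact h.adj_of_adj_fst h2P3 hP3K3 hxv1 hx2 hx3 hx4 hy3 hy1 hy2 hy4 hy4'
  · exact h.swap_left.adj_of_adj_fst h2P3 hP3K3 hxv2 hx1 hx3 hx4 hy3 hy2 hy1 hy4 hy4'

end Induced2K2

theorem n3_or_n4_empty {V : Type*} (G : SimpleGraph V)
    (hfree : FFree G) (v1 v2 v3 v4 : V) (h2K2 : Induced2K2 G v1 v2 v3 v4)
    (hne : ∃ x : V, x ∉ ({v1, v2, v3, v4} : Set V) ∧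
      (G.Adj x v1 ∨ G.Adj x v2) ∧ ¬ G.Adj x v3 ∧ ¬ G.Adj x v4) :
    (¬ ∃ y : V, y ∉ ({v1, v2, v3, v4} : Set V) ∧
        G.Adj y v3 ∧ ¬ G.Adj y v1 ∧ ¬ G.Adj y v2 ∧ ¬ G.Adj y v4) ∨
    (¬ ∃ y : V, y ∉ ({v1, v2, v3, v4} : Set V) ∧
        G.Adj y v4 ∧ ¬ G.Adj y v1 ∧ ¬ G.Adj y v2 ∧ ¬ G.Adj y v3) := by
  obtain ⟨h2P3, hP3K3, -, hC4, hC5, -⟩ := hfree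
  obtain ⟨x, hx, hx12, hx3, hx4⟩ := hne
  refine not_and_or.mp ?_
  rintro ⟨⟨y, hy, hy3, hy1, hy2, hy4⟩, ⟨z, hz, hz4, hz1, hz2, hz3⟩⟩
  simp only [Set.mem_insert_iff, Set.mem_singleton_iff, not_or] at hx hy hz
  obtain ⟨hxv1, hxv2, -, -⟩ := hx
  obtain ⟨-, -, -, hyv4⟩ := hy
  obtain ⟨-, -, hzv3, -⟩ := hz
  have hxy : G.Adj x y :=
    h2K2.adj_of_adj_left h2P3 hP3K3 hx12 hxv1 hxv2 hx3 hx4 hy3 hy1 hy2 hy4 hyv4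
  have hxz : G.Adj x z :=
    h2K2.swap_right.adj_of_adj_left h2P3 hP3K3 hx12 hxv1 hxv2 hx4 hx3 hz4 hz1 hz2 hz3 hzv3
  obtain ⟨-, -, -, -, -, -, -, a34, -, -, -, -⟩ := h2K2
  have hyz : ¬ G.Adj y z := fun hyz =>
    no_induced_cycle4 hC4 hy3 a34 hz4.symm hyz hy4 (fun h => hz3 h.symm) hyv4 (Ne.symm hzv3)
  exact no_induced_cycle5 hC5 hxy hy3 a34 hz4.symm hxz hx3 hx4 hy4 hyz (fun h => hz3 h.symm)
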